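/- If M is a d-decodable m×n binary matrix, then every set of at most d columns of M is linearly independent over GF(2); consequently, M is a parity-check matrix of a binary linear code of length n with minimum Hamming distance at least d+1, and m ≥ n − K(n,d+1), where K(n,d+1) is the largest dimension of a binary linear code of length n with minimum distance at least d+1. -/
import Mathlib


/-- `M` is `d`-decodable: every nonempty set of at most `d` columns contains a
row whose restriction to the set has weight exactly one. -/
def IsDecodable {m n : ℕ} (M : Matrix (Fin m) (Fin n) (ZMod 2)) (d : ℕ) : Prop :=
  ∀ S : Finset (Fin n), S.Nonempty → S.card ≤ d →
    ∃ i : Fin m, (S.filter (fun j => M i j = 1)).card = 1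

/-- `K(n,D)`: the largest dimension of a binary linear code of length `n` with
minimum Hamming distance at least `D`. -/
noncomputable def maxDim (n D : ℕ) : ℕ :=
  sSup {k | ∃ C : Submodule (ZMod 2) (Fin n → ZMod 2),
    Module.finrank (ZMod 2) C = k ∧
    ∀ x ∈ C, x ≠ 0 → D ≤ (Finset.univ.filter (fun j => x j ≠ 0)).card}

lemma key {m n d : ℕ} (M : Matrix (Fin m) (Fin n) (ZMod 2)) (hM : IsDecodable M d)
    (x : Fin n → ZMod 2) (hx : x ≠ 0) (hMx : M.mulVec x = 0) :
    d + 1 ≤ (Finset.univ.filter (fun j => x j ≠ 0)).card := by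
  by_contra h
  push_neg at h
  set S := Finset.univ.filter (fun j => x j ≠ 0) with hS
  have hne : S.Nonempty := by
    obtain ⟨j, hj⟩ := Function.ne_iff.mp hx
    exact ⟨j, by simp only [hS, Finset.mem_filter, Finset.mem_univ, true_and]; simpa using hj⟩
  obtain ⟨i, hi⟩ := hM S hne (by omega)
  have h1 : M.mulVec x i = 1 := by
    have e1 : M.mulVec x i = ∑ j ∈ S, M i j * x j := by
      rw [Matrix.mulVec, dotProduct]
      exact (Finset.sum_subset S.subset_univ (by
        intro j _ hj
        simp only [hS, Finset.mem_filter, Finset.mem_univ, true_and, not_not] at hj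
        simp [hj])).symm
    have e2 : ∀ j ∈ S, M i j * x j = M i j := by
      intro j hj
      simp only [hS, Finset.mem_filter, Finset.mem_univ, true_and] at hj
      have hne01 : ∀ a : ZMod 2, a ≠ 0 → a = 1 := by decide
      have : x j = 1 := hne01 _ hj
      simp [this]
    rw [e1, Finset.sum_congr rfl e2]
    have e3 : ∀ j ∈ S, M i j = if M i j = 1 then (1 : ZMod 2) else 0 := by
      intro j _
      generalize M i j = a; revert a; decide
    rw [Finset.sum_congr rfl e3, Finset.sum_boole]
    rw [hi]; norm_num
  rw [hMx] at h1
  simp at h1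

theorem decodable_linear_independence {m n d : ℕ}
    (M : Matrix (Fin m) (Fin n) (ZMod 2)) (hM : IsDecodable M d) :
    (∀ S : Finset (Fin n), S.card ≤ d →
      LinearIndependent (ZMod 2) (fun j : {x // x ∈ S} => fun i => M i j.val)) ∧
    (∀ x : Fin n → ZMod 2, x ≠ 0 → M.mulVec x = 0 →
      d + 1 ≤ (Finset.univ.filter (fun j => x j ≠ 0)).card) ∧
    n - maxDim n (d + 1) ≤ m := by
  refine ⟨?_, key M hM, ?_⟩
  · intro S hSd
    rw [Fintype.linearIndependent_iff]
    intro g hg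
    set x : Fin n → ZMod 2 := fun j => if h : j ∈ S then g ⟨j, h⟩ else 0 with hxdef
    have hMx : M.mulVec x = 0 := by
      funext i
      simp only [Pi.zero_apply]
      have e1 : M.mulVec x i = ∑ j ∈ S, M i j * x j := by
        rw [Matrix.mulVec, dotProduct]
        exact (Finset.sum_subset S.subset_univ (by
          intro j _ hj
          simp [hxdef, hj])).symm
      rw [e1]
      have e2 : ∑ j ∈ S, M i j * x j = ∑ j ∈ S.attach, M i j.val * g j := by
        rw [← Finset.sum_attach S (fun j => M i j * x j)]
        refine Finset.sum_congr rfl ?_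
        intro j _
        simp [hxdef, j.2]
      rw [e2]
      have := congrFun hg i
      simp only [Finset.sum_apply, Pi.smul_apply, smul_eq_mul, Pi.zero_apply] at this
      rw [← this]
      exact Finset.sum_congr rfl (fun j _ => mul_comm _ _)
    by_cases hx0 : x = 0
    · intro j
      have := congrFun hx0 j.val
      simpa [hxdef, j.2] using this
    · exfalso
      have := key M hM x hx0 hMx
      have hsub : (Finset.univ.filter (fun j => x j ≠ 0)) ⊆ S := by
        intro j hj
        simp only [Finset.mem_filter, Finset.mem_univ, true_and, hxdef] at hj
        by_contra hjS
        simp [hjS] at hj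
      have := Finset.card_le_card hsub
      omega
  · -- dimension bound
    set f := M.mulVecLin
    have hker : ∀ x ∈ LinearMap.ker f, x ≠ 0 →
        d + 1 ≤ (Finset.univ.filter (fun j => x j ≠ 0)).card := by
      intro x hx hx0
      exact key M hM x hx0 (LinearMap.mem_ker.mp hx)
    have hmem : Module.finrank (ZMod 2) (LinearMap.ker f) ∈
        {k | ∃ C : Submodule (ZMod 2) (Fin n → ZMod 2),
          Module.finrank (ZMod 2) C = k ∧
          ∀ x ∈ C, x ≠ 0 → d + 1 ≤ (Finset.univ.filter (fun j => x j ≠ 0)).card} :=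
      ⟨LinearMap.ker f, rfl, hker⟩
    have hbdd : BddAbove {k | ∃ C : Submodule (ZMod 2) (Fin n → ZMod 2),
          Module.finrank (ZMod 2) C = k ∧
          ∀ x ∈ C, x ≠ 0 → d + 1 ≤ (Finset.univ.filter (fun j => x j ≠ 0)).card} := by
      refine ⟨n, ?_⟩
      rintro k ⟨C, rfl, -⟩
      have := Submodule.finrank_le C
      simpa using this
    have h1 : Module.finrank (ZMod 2) (LinearMap.ker f) ≤ maxDim n (d + 1) :=
      le_csSup hbdd hmem
    have h2 : Module.finrank (ZMod 2) (LinearMap.range f) +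
        Module.finrank (ZMod 2) (LinearMap.ker f) = n := by
      have := LinearMap.finrank_range_add_finrank_ker f
      simpa using this
    have h3 : Module.finrank (ZMod 2) (LinearMap.range f) ≤ m := by
      have := Submodule.finrank_le (LinearMap.range f)
      simpa using this
    omega
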